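/- For each j ∈ {1,2,3}, every reduced word w = w1…w(2n) over A = {a,b,c} of even length 2n ≥ 2, and every letter p ∈ A with p ≠ w1, the word σj^p(w) has even length, each of its consecutive disjoint pairs consists of two distinct letters, and υ(σj^p(w)) = σj^*(υ(w)), where σ1^*, σ2^*, σ3^* are the monoid homomorphisms on words over N = {1,2,3} given by σ1^*: 1↦1, 2↦12, 3↦13; σ2^*: 1↦21, 2↦2, 3↦23; σ3^*: 1↦31, 2↦32, 3↦3. In particular, the factorizations of the substitutions σ1, σ2, σ3 are well defined, and the factorization of σ1∘σ2∘σ3 equals the cube of the Tribonacci substitution σ_R (1↦12, 2↦13, 3↦1). -/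

import Mathlib

/-- The alphabet `A = {a, b, c}`; the letter `tj` corresponding to `j ∈ {1,2,3}` is
`t1 = a`, `t2 = b`, `t3 = c`. -/
inductive ABC : Type
  | a : ABC
  | b : ABC
  | c : ABC
deriving DecidableEq

/-- A word is reduced if no two consecutive letters are equal. -/
def ReducedWord (w : List ABC) : Prop := List.Chain' (· ≠ ·) w

/-- The consecutive disjoint pairs of a word each consist of two distinct letters. -/
def PairsDistinct : List ABC → Prop
  | x :: y :: rest => x ≠ y ∧ PairsDistinct rest
  | _ => True

/-- The code of a pair of distinct letters: `3` for `ab`/`ba`, `2` for `ac`/`ca`,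
`1` for `bc`/`cb` (junk value `0` otherwise). -/
def pairCode : ABC → ABC → ℕ
  | .a, .b => 3
  | .b, .a => 3
  | .a, .c => 2
  | .c, .a => 2
  | .b, .c => 1
  | .c, .b => 1
  | _, _ => 0

/-- The factorization map `υ`. -/
def fac : List ABC → List ℕ
  | x :: y :: rest => pairCode x y :: fac rest
  | _ => []

/-- The letter different from both arguments (junk value when they coincide). -/
def third : ABC → ABC → ABC
  | .a, .b => .c
  | .b, .a => .c
  | .a, .c => .b
  | .c, .a => .b
  | .b, .c => .a
  | .c, .b => .a
  | x, _ => x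

/-- `σj(p,x)` (with `t = tj`): equals `x` if `x ≠ tj`, and `y p tj` if `x = tj`, where
`y` is the letter different from both `p` and `tj`. -/
def sigjLetter (t p x : ABC) : List ABC :=
  if x = t then [third p t, p, t] else [x]

/-- `σj^p(w) = σj(p,w1) σj(w1,w2) ⋯ σj(w(n-1),wn)`. -/
def sigjWord (t : ABC) (p : ABC) : List ABC → List ABC
  | [] => []
  | x :: rest => sigjLetter t p x ++ sigjWord t x rest

/-- The factorized substitutions `σ1^*, σ2^*, σ3^*` on letters of `N = {1,2,3}`
(indexed by `t1 = a`, `t2 = b`, `t3 = c`):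
`σ1^*: 1↦1, 2↦12, 3↦13`; `σ2^*: 1↦21, 2↦2, 3↦23`; `σ3^*: 1↦31, 2↦32, 3↦3`. -/
def starLetter : ABC → ℕ → List ℕ
  | .a, 1 => [1]
  | .a, 2 => [1, 2]
  | .a, 3 => [1, 3]
  | .b, 1 => [2, 1]
  | .b, 2 => [2]
  | .b, 3 => [2, 3]
  | .c, 1 => [3, 1]
  | .c, 2 => [3, 2]
  | .c, 3 => [3]
  | _, _ => []

/-- The Tribonacci substitution `σ_R : 1 ↦ 12, 2 ↦ 13, 3 ↦ 1` on letters. -/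
def tribLetter : ℕ → List ℕ
  | 1 => [1, 2]
  | 2 => [1, 3]
  | 3 => [1]
  | _ => []

/-- The Tribonacci substitution `σ_R` on words over `N`. -/
def tribSub (u : List ℕ) : List ℕ := u.flatMap tribLetter

instance instDecPD : ∀ w, Decidable (PairsDistinct w)
  | [] => .isTrue trivial
  | [_] => .isTrue trivial
  | _ :: _ :: r => @instDecidableAnd _ _ _ (instDecPD r)

lemma fac_append : ∀ u v : List ABC, u.length % 2 = 0 → fac (u ++ v) = fac u ++ fac v
  | [], v, _ => rfl
  | [_], v, h => by simp at h
  | x :: y :: r, v, h => by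
    have : r.length % 2 = 0 := by simp only [List.length_cons] at h; omega
    simp [fac, fac_append r v this]

lemma pd_append : ∀ u v : List ABC, u.length % 2 = 0 → PairsDistinct u → PairsDistinct v →
    PairsDistinct (u ++ v)
  | [], v, _, _, hv => hv
  | [_], v, h, _, _ => by simp at h
  | x :: y :: r, v, h, hu, hv => by
    have : r.length % 2 = 0 := by simp only [List.length_cons] at h; omega
    exact ⟨hu.1, pd_append r v this hu.2 hv⟩

lemma seg_facts (t p x y : ABC) (hpx : p ≠ x) (hxy : x ≠ y) :
    (sigjLetter t p x ++ sigjLetter t x y).length % 2 = 0 ∧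
    PairsDistinct (sigjLetter t p x ++ sigjLetter t x y) ∧
    fac (sigjLetter t p x ++ sigjLetter t x y) = starLetter t (pairCode x y) := by
  cases t <;> cases p <;> cases x <;> cases y <;>
    first
      | exact absurd rfl hpx
      | exact absurd rfl hxy
      | decide

lemma key : ∀ (t : ABC) (w : List ABC), w.length % 2 = 0 → ReducedWord w →
    ∀ p : ABC, w.head? ≠ some p →
      (sigjWord t p w).length % 2 = 0 ∧
      PairsDistinct (sigjWord t p w) ∧
      fac (sigjWord t p w) = (fac w).flatMap (starLetter t)
  | t, [], _, _, p, _ => ⟨rfl, trivial, rfl⟩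
  | t, [_], h, _, _, _ => by simp at h
  | t, x :: y :: rest, hlen, hred, p, hp => by
    have hrl : rest.length % 2 = 0 := by simp only [List.length_cons] at hlen; omega
    have hpx : p ≠ x := by simpa [eq_comm] using hp
    have hxy : x ≠ y := (List.isChain_cons_cons.mp hred).1
    have hredt : ReducedWord (y :: rest) := (List.isChain_cons_cons.mp hred).2
    have hhd : rest.head? ≠ some y := by
      cases rest with
      | nil => simp
      | cons z r =>
        have h' : List.Chain' (· ≠ ·) (y :: z :: r) := hredt
        have := (List.isChain_cons_cons.mp h').1
        simpa [eq_comm] using this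
    have hrt : ReducedWord rest := List.IsChain.tail (l := y :: rest) hredt
    have ih := key t rest hrl hrt y hhd
    obtain ⟨hs1, hs2, hs3⟩ := seg_facts t p x y hpx hxy
    have hw : sigjWord t p (x :: y :: rest)
        = (sigjLetter t p x ++ sigjLetter t x y) ++ sigjWord t y rest := by
      simp [sigjWord]
    refine ⟨?_, ?_, ?_⟩
    · rw [hw]
      simp only [List.length_append] at hs1 ⊢
      omega
    · rw [hw]; exact pd_append _ _ hs1 hs2 ih.2.1
    · rw [hw, fac_append _ _ hs1, hs3, ih.2.2]
      simp [fac, List.flatMap_cons]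

lemma comp_letter : ∀ m : ℕ, m = 1 ∨ m = 2 ∨ m = 3 →
    ((starLetter .c m).flatMap (starLetter .b)).flatMap (starLetter .a)
      = tribSub (tribSub (tribSub [m])) := by
  rintro m (rfl | rfl | rfl) <;> decide

/-- The factorizations of `σ1, σ2, σ3` are well defined and equal `σ1^*, σ2^*, σ3^*`;
in particular the factorization of `σ1 ∘ σ2 ∘ σ3` is the cube of the Tribonacci
substitution `σ_R`. -/
theorem statement16 :
    (∀ t : ABC, ∀ w : List ABC, ∀ n : ℕ, 1 ≤ n → w.length = 2 * n →
      ReducedWord w → ∀ p : ABC, w.head? ≠ some p →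
        (sigjWord t p w).length % 2 = 0 ∧
        PairsDistinct (sigjWord t p w) ∧
        fac (sigjWord t p w) = (fac w).flatMap (starLetter t)) ∧
    (∀ u : List ℕ, (∀ m ∈ u, m = 1 ∨ m = 2 ∨ m = 3) →
      ((u.flatMap (starLetter ABC.c)).flatMap (starLetter ABC.b)).flatMap
          (starLetter ABC.a)
        = tribSub (tribSub (tribSub u))) := by
  constructor
  · intro t w n _ hlen hred p hp
    exact key t w (by omega) hred p hp
  · intro u hu
    induction u with
    | nil => rfl
    | cons m r ih =>
      have h1 := comp_letter m (hu m (by simp))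
      have h2 := ih (fun x hx => hu x (by simp [hx]))
      simp only [List.flatMap_cons, List.flatMap_append] at *
      simp only [tribSub, List.flatMap_cons, List.flatMap_append] at *
      simp only [List.flatMap_nil, List.append_nil] at h1
      rw [h1, h2]
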